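/- Let M₁ and M₂ be matroids on ground sets E₁ and E₂ with E₁ ∩ E₂ = {c}, where c is neither a loop nor a coloop of M₁ or of M₂. If the toric ideals J_{M₁} and J_{M₂} are both generated by quadratic binomials, then the toric ideal of the 2-sum M₁ ⊕₂ M₂ is generated by quadratic binomials. -/

import Mathlib

open MvPolynomial


section Toric

/-- The toric (bases monomial) map of a matroid: the variables are indexed by the bases of `M`,
and the variable of a basis `B` is sent to `∏_{l ∈ B} s_l`. -/
noncomputable def matroidToricMap (K : Type) [Field K] {α : Type} [Fintype α] [DecidableEq α]
    (M : Matroid α) :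
    MvPolynomial {B : Finset α // M.IsBase ↑B} K →ₐ[K] MvPolynomial α K :=
  aeval fun b => ∏ l ∈ b.1, X l

/-- The toric ideal `J_M` of a matroid `M`. -/
noncomputable def matroidToricIdeal (K : Type) [Field K] {α : Type} [Fintype α] [DecidableEq α]
    (M : Matroid α) : Ideal (MvPolynomial {B : Finset α // M.IsBase ↑B} K) :=
  RingHom.ker (matroidToricMap K M).toRingHom

/-- `G` consists of quadratic binomials `x_i x_j - x_k x_l`. -/
def IsQuadBinomialSet {σ K : Type} [Field K] (G : Set (MvPolynomial σ K)) : Prop :=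
  ∀ f ∈ G, ∃ i j k l : σ, f = X i * X j - X k * X l

/-- The ideal `I` is generated by quadratic binomials. -/
def GeneratedByQuadBinomials {σ K : Type} [Field K] (I : Ideal (MvPolynomial σ K)) : Prop :=
  ∃ G : Set (MvPolynomial σ K), IsQuadBinomialSet G ∧ Ideal.span G = I

end Toric

section MatroidOps

/-- `c` is a loop of `M`: an element of the ground set belonging to no basis of `M`. -/
def IsLoopElem {α : Type} (M : Matroid α) (c : α) : Prop :=
  c ∈ M.E ∧ ∀ B, M.IsBase B → c ∉ B

/-- `c` is a coloop of `M`: an element contained in every basis of `M`. -/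
def IsColoopElem {α : Type} (M : Matroid α) (c : α) : Prop :=
  ∀ B, M.IsBase B → c ∈ B

/-- `M'` is the deletion `M ∖ c`: its ground set is `M.E \ {c}` and its bases are
`{B \ {c} : B basis of M}` if `c` is a coloop of `M`, and `{B basis of M : c ∉ B}`
otherwise. -/
def IsDeletionOf {α : Type} (M' M : Matroid α) (c : α) : Prop :=
  M'.E = M.E \ {c} ∧ ∀ S : Set α, M'.IsBase S ↔
    ((IsColoopElem M c ∧ ∃ B, M.IsBase B ∧ S = B \ {c}) ∨
     (¬ IsColoopElem M c ∧ M.IsBase S ∧ c ∉ S))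

/-- `M'` is the contraction `M / c`, defined dually: `M / c = (M✶ ∖ c)✶`. -/
def IsContractionOf {α : Type} (M' M : Matroid α) (c : α) : Prop :=
  IsDeletionOf (M'✶) (M✶) c

end MatroidOps

/-!
The toric ideal of a weighting `d : σ → Multiset α` (the kernel of `x_s ↦ ∏_{a ∈ d s} s_a`) is
generated by quadratic binomials exactly when any two multisets of variables of equal weight are
connected by quadratic steps `{i, j} + w ~ {k, l} + w` with `d i + d j = d k + d l`.

The bases of `M₁ ⊕₂ M₂` are the sets `(B ∪ D) \ {c}` for bases `B` of `M₁` and `D` of `M₂` of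
which exactly one contains `c`. These pairs form the fibre product of `B ↦ (c ∈ B)` and
`D ↦ (c ∉ D)`, and the weight of a pair is that of its base of the 2-sum plus `c`. Since the
ground sets meet only in `c` and all bases of a matroid have the same size, two multisets of pairs
of equal weight have first projections of equal weight and second projections of equal weight.
A quadratic step between first projections lifts to a quadratic step between multisets of pairs,
because it preserves how many of the two bases contain `c`; likewise for second projections.
Finally, two multisets of pairs with the same projections are connected by steps exchanging
second coordinates.
-/

open Relation

namespace Multiset

variable {α β : Type*}

lemma exists_cons_of_map_eq_cons {f : α → β} {s : Multiset α} {b : β} {t : Multiset β}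
    (h : s.map f = b ::ₘ t) : ∃ a s', s = a ::ₘ s' ∧ f a = b ∧ s'.map f = t := by
  classical
  obtain ⟨a, ha, hb, ht⟩ := (map_eq_cons f s t b).2 h
  exact ⟨a, s.erase a, (cons_erase ha).symm, hb, ht⟩

lemma card_bind_of_forall_card_eq {f : β → Multiset α} {r : ℕ} (hf : ∀ b, card (f b) = r)
    (s : Multiset β) : card (s.bind f) = card s * r := by
  rw [card_bind, Function.comp_def, map_congr rfl fun b _ => hf b, map_const', sum_replicate,
    smul_eq_mul]

lemma card_bind_eq_card_bind {f : β → Multiset α} (hf : ∀ b b', card (f b) = card (f b'))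
    {s t : Multiset β} (h : card s = card t) : card (s.bind f) = card (t.bind f) := by
  rcases isEmpty_or_nonempty β with hβ | ⟨⟨b₀⟩⟩
  · rw [Subsingleton.elim s t]
  · rw [card_bind_of_forall_card_eq (hf · b₀), card_bind_of_forall_card_eq (hf · b₀), h]

lemma card_eq_card_of_bind_eq {f : β → Multiset α} (hf : ∀ b b', card (f b) = card (f b'))
    (hne : ∀ b, f b ≠ 0) {s t : Multiset β} (h : s.bind f = t.bind f) : card s = card t := by
  rcases isEmpty_or_nonempty β with hβ | ⟨⟨b₀⟩⟩
  · rw [Subsingleton.elim s t]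
  · have hcard := congrArg card h
    rw [card_bind_of_forall_card_eq (hf · b₀), card_bind_of_forall_card_eq (hf · b₀)] at hcard
    exact Nat.eq_of_mul_eq_mul_right (card_pos.2 (hne b₀)) hcard

lemma eq_of_add_eq_add_of_card_eq {E₁ E₂ : Set α} {c : α} (hE : E₁ ∩ E₂ = {c})
    {X Y X' Y' : Multiset α} (hX : ∀ a ∈ X, a ∈ E₁) (hX' : ∀ a ∈ X', a ∈ E₁)
    (hY : ∀ a ∈ Y, a ∈ E₂) (hY' : ∀ a ∈ Y', a ∈ E₂) (h : X + Y = X' + Y')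
    (hcard : card X = card X') : X = X' := by
  classical
  -- away from `c`, the summand `X` is the part of `X + Y` outside `E₂`
  have hoff (Z W : Multiset α) (hZ : ∀ a ∈ Z, a ∈ E₁) (hW : ∀ a ∈ W, a ∈ E₂) :
      (Z + W).filter (· ∉ E₂) = Z.filter (· ≠ c) := by
    rw [filter_add, filter_eq_nil.2 fun a ha => not_not.2 (hW a ha), add_zero]
    refine filter_congr fun a ha => ⟨?_, fun hac ha₂ => hac (hE.le ⟨hZ a ha, ha₂⟩)⟩
    rintro ha₂ rfl
    exact ha₂ (hE.ge rfl).2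
  have hne : X.filter (· ≠ c) = X'.filter (· ≠ c) := by
    rw [← hoff X Y hX hY, ← hoff X' Y' hX' hY', h]
  have hsplit (Z : Multiset α) : Z = replicate (Z.count c) c + Z.filter (· ≠ c) := by
    rw [← filter_eq', filter_add_not]
  have hcount : X.count c = X'.count c := by
    have h₁ := congrArg card (hsplit X)
    have h₂ := congrArg card (hsplit X')
    simp only [card_add, card_replicate, hne] at h₁ h₂
    omega
  rw [hsplit X, hsplit X', hcount, hne]

end Multiset

section QuadStep

variable {σ τ C A : Type*} [AddCommMonoid A]

def QuadStep (d : σ → A) (m m' : Multiset σ) : Prop :=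
  ∃ i j k l w, d i + d j = d k + d l ∧ m = i ::ₘ j ::ₘ w ∧ m' = k ::ₘ l ::ₘ w

instance QuadStep.instSymm (d : σ → A) : Std.Symm (QuadStep d) where
  symm _ _ := fun ⟨i, j, k, l, w, h, hm, hm'⟩ => ⟨k, l, i, j, w, h.symm, hm', hm⟩

def QuadStepInvariant (d : σ → A) (f : σ → C) : Prop :=
  ∀ ⦃i j k l⦄, d i + d j = d k + d l → s(f i, f j) = s(f k, f l)

lemma QuadStep.cons {d : σ → A} {m m' : Multiset σ} (a : σ) (h : QuadStep d m m') :
    QuadStep d (a ::ₘ m) (a ::ₘ m') := by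
  obtain ⟨i, j, k, l, w, hw, rfl, rfl⟩ := h
  exact ⟨i, j, k, l, a ::ₘ w, hw, by rw [Multiset.cons_swap a, Multiset.cons_swap a],
    by rw [Multiset.cons_swap a, Multiset.cons_swap a]⟩

lemma QuadStep.reflTransGen_cons {d : σ → A} {m m' : Multiset σ} (a : σ)
    (h : ReflTransGen (QuadStep d) m m') : ReflTransGen (QuadStep d) (a ::ₘ m) (a ::ₘ m') :=
  ReflTransGen.lift (a ::ₘ ·) (fun _ _ => QuadStep.cons a) _ _ h

lemma QuadStep.map {d : σ → A} {d' : τ → A} (f : σ → τ)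
    (hf : ∀ i j k l, d i + d j = d k + d l → d' (f i) + d' (f j) = d' (f k) + d' (f l))
    {m m' : Multiset σ} (h : QuadStep d m m') : QuadStep d' (m.map f) (m'.map f) := by
  obtain ⟨i, j, k, l, w, hw, rfl, rfl⟩ := h
  exact ⟨f i, f j, f k, f l, w.map f, hf i j k l hw, by simp, by simp⟩

end QuadStep

section Toric

variable (K : Type*) [Field K] {σ α A : Type*} [AddCommMonoid A]

noncomputable def toricHom (d : σ → Multiset α) : MvPolynomial σ K →ₐ[K] MvPolynomial α K :=
  aeval fun s => ((d s).map X).prod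

variable {K}

lemma mem_ker_toricHom {d : σ → Multiset α} {f : MvPolynomial σ K} :
    f ∈ RingHom.ker (toricHom K d).toRingHom ↔ toricHom K d f = 0 :=
  Iff.rfl

lemma toricHom_prod_map_X (d : σ → Multiset α) (m : Multiset σ) :
    toricHom K d (m.map X).prod = ((m.bind d).map X).prod := by
  simp [toricHom, map_multiset_prod, Multiset.map_bind, Multiset.prod_bind]

lemma prod_map_X_eq_monomial [DecidableEq σ] (m : Multiset σ) :
    ((m.map X).prod : MvPolynomial σ K) = monomial (Multiset.toFinsupp m) 1 := by
  induction m using Multiset.induction_on with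
  | empty => simp
  | cons a m ih =>
    rw [← Multiset.singleton_add, Multiset.toFinsupp_add, Multiset.toFinsupp_singleton]
    simp [ih, X, monomial_mul]

lemma prod_map_X_injective :
    Function.Injective fun m : Multiset σ => ((m.map X).prod : MvPolynomial σ K) := by
  classical
  intro m m' h
  simpa [prod_map_X_eq_monomial, monomial_left_inj] using h

lemma ker_toricHom_le {d : σ → Multiset α} {I : Ideal (MvPolynomial σ K)}
    (h : ∀ m m' : Multiset σ, m.bind d = m'.bind d → (m.map X).prod - (m'.map X).prod ∈ I) :
    RingHom.ker (toricHom K d).toRingHom ≤ I := by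
  classical
  let rep (w : Multiset α) : Multiset σ := if hw : ∃ m, m.bind d = w then hw.choose else 0
  have hrep (m : Multiset σ) : (rep (m.bind d)).bind d = m.bind d := by
    simp only [rep, dif_pos (⟨m, rfl⟩ : ∃ m', m'.bind d = m.bind d)]
    exact Exists.choose_spec (⟨m, rfl⟩ : ∃ m', m'.bind d = m.bind d)
  -- `ψ` sends `s ^ w` to the class of a chosen monomial of weight `w`, so `ψ ∘ toricHom` is the
  -- quotient map, which therefore kills the kernel
  let ψ : MvPolynomial α K →ₗ[K] MvPolynomial σ K ⧸ I := (basisMonomials α K).constr K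
    fun v => Ideal.Quotient.mk I ((rep (Finsupp.toMultiset v)).map X).prod
  have hψ : ψ ∘ₗ (toricHom K d).toLinearMap = (Ideal.Quotient.mkₐ K I).toLinearMap := by
    refine (basisMonomials σ K).ext fun u => ?_
    obtain ⟨m, rfl⟩ := Multiset.toFinsupp.surjective u
    have hm := h _ _ (hrep m)
    simp only [LinearMap.comp_apply, AlgHom.toLinearMap_apply, coe_basisMonomials,
      ← prod_map_X_eq_monomial, toricHom_prod_map_X, Ideal.Quotient.mkₐ_eq_mk]
    have hb := (basisMonomials α K).constr_basis K
      (fun v => Ideal.Quotient.mk I ((rep (Finsupp.toMultiset v)).map X).prod)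
      (Multiset.toFinsupp (m.bind d))
    rw [coe_basisMonomials, Multiset.toFinsupp_toMultiset] at hb
    rw [prod_map_X_eq_monomial, hb, Ideal.Quotient.eq.mpr hm]
  intro f hf
  rw [mem_ker_toricHom] at hf
  rw [← Ideal.Quotient.eq_zero_iff_mem, ← Ideal.Quotient.mkₐ_eq_mk K, ← AlgHom.toLinearMap_apply,
    ← hψ, LinearMap.comp_apply, AlgHom.toLinearMap_apply, hf, map_zero]

lemma eqvGen_quadStep_of_mem_span {d : σ → A} {G : Set (MvPolynomial σ K)}
    (hG : ∀ g ∈ G, ∃ i j k l, d i + d j = d k + d l ∧ g = X i * X j - X k * X l)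
    {m m' : Multiset σ} (h : (m.map X).prod - (m'.map X).prod ∈ Ideal.span G) :
    EqvGen (QuadStep d) m m' := by
  classical
  -- `T` sends a monomial to the indicator of its class up to quadratic steps
  let T : MvPolynomial σ K →ₗ[K] Quot (QuadStep d) →₀ K := (basisMonomials σ K).constr K
    fun u => Finsupp.single (Quot.mk _ (Finsupp.toMultiset u)) 1
  have hT (m : Multiset σ) : T (m.map X).prod = Finsupp.single (Quot.mk _ m) 1 := by
    have hb := (basisMonomials σ K).constr_basis K
      (fun u => Finsupp.single (Quot.mk (QuadStep d) (Finsupp.toMultiset u)) (1 : K))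
      (Multiset.toFinsupp m)
    simp only [coe_basisMonomials, Multiset.toFinsupp_toMultiset] at hb
    rwa [prod_map_X_eq_monomial]
  have hker (g) (hg : g ∈ G) (p : MvPolynomial σ K) : T (p * g) = 0 := by
    obtain ⟨i, j, k, l, hw, rfl⟩ := hG g hg
    induction p using MvPolynomial.induction_on' with
    | add p q hp hq => rw [add_mul, map_add, hp, hq, add_zero]
    | monomial u c =>
      obtain ⟨w, rfl⟩ := Multiset.toFinsupp.surjective u
      have hstep : Quot.mk (QuadStep d) (i ::ₘ j ::ₘ w) = Quot.mk _ (k ::ₘ l ::ₘ w) :=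
        Quot.sound ⟨i, j, k, l, w, hw, rfl, rfl⟩
      have hmon : (monomial (Multiset.toFinsupp w) c : MvPolynomial σ K)
          = C c * (w.map X).prod := by
        rw [prod_map_X_eq_monomial, C_mul_monomial, mul_one]
      have hpoly (i j : σ) : (monomial (Multiset.toFinsupp w) c : MvPolynomial σ K)
          * (X i * X j) = c • ((i ::ₘ j ::ₘ w).map X).prod := by
        rw [hmon, smul_eq_C_mul]; simp only [Multiset.map_cons, Multiset.prod_cons]; ring
      rw [mul_sub, hpoly, hpoly, map_sub, map_smul, map_smul, hT, hT, hstep, sub_self]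
  have hspan : ∀ f ∈ Ideal.span G, ∀ p, T (p * f) = 0 := by
    intro f hf
    induction hf using Submodule.span_induction with
    | mem g hg => exact hker g hg
    | zero => simp
    | add x y _ _ hx hy => intro p; rw [mul_add, map_add, hx, hy, add_zero]
    | smul a x _ hx => intro p; rw [smul_eq_mul, ← mul_assoc, hx]
  have h0 := hspan _ h 1
  rw [one_mul, map_sub, hT, hT, sub_eq_zero] at h0
  exact Quot.eqvGen_exact (Finsupp.single_left_injective one_ne_zero h0)

lemma prod_map_X_sub_prod_map_X_of_quadStep {d : σ → Multiset α} {m m' : Multiset σ}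
    (h : QuadStep d m m') : ∃ i j k l, ∃ w : Multiset σ, d i + d j = d k + d l ∧
      ((m.map X).prod - (m'.map X).prod : MvPolynomial σ K)
        = (w.map X).prod * (X i * X j - X k * X l) := by
  obtain ⟨i, j, k, l, w, hw, rfl, rfl⟩ := h
  exact ⟨i, j, k, l, w, hw, by simp only [Multiset.map_cons, Multiset.prod_cons]; ring⟩

lemma toricHom_X_mul_X (d : σ → Multiset α) (i j : σ) :
    toricHom K d (X i * X j) = ((d i + d j).map X).prod := by
  simp [toricHom]

theorem generatedByQuadBinomials_ker_toricHom_iff (K : Type) [Field K] {σ α : Type}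
    {d : σ → Multiset α} :
    GeneratedByQuadBinomials (RingHom.ker (toricHom K d).toRingHom) ↔
      ∀ m m' : Multiset σ, m.bind d = m'.bind d → ReflTransGen (QuadStep d) m m' := by
  constructor
  · rintro ⟨G, hG, hspan⟩ m m' hmm'
    rw [← EqvGen.eqvGen_eq_reflTransGen]
    refine eqvGen_quadStep_of_mem_span (G := G) (fun g hg => ?_) ?_
    · obtain ⟨i, j, k, l, rfl⟩ := hG g hg
      have hg' : X i * X j - X k * X l ∈ RingHom.ker (toricHom K d).toRingHom :=
        hspan ▸ Ideal.subset_span hg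
      rw [mem_ker_toricHom, map_sub, sub_eq_zero, toricHom_X_mul_X, toricHom_X_mul_X] at hg'
      exact ⟨i, j, k, l, prod_map_X_injective hg', rfl⟩
    · rw [hspan, mem_ker_toricHom, map_sub, toricHom_prod_map_X, toricHom_prod_map_X, hmm',
        sub_self]
  · intro h
    let G : Set (MvPolynomial σ K) :=
      {g | ∃ i j k l, d i + d j = d k + d l ∧ g = X i * X j - X k * X l}
    refine ⟨G, fun g ⟨i, j, k, l, _, hg⟩ => ⟨i, j, k, l, hg⟩, le_antisymm ?_ ?_⟩
    · rw [Ideal.span_le]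
      rintro g ⟨i, j, k, l, hw, rfl⟩
      rw [SetLike.mem_coe, mem_ker_toricHom, map_sub, toricHom_X_mul_X, toricHom_X_mul_X, hw,
        sub_self]
    · refine ker_toricHom_le fun m m' hmm' => ?_
      have hconn := h m m' hmm'
      clear hmm'
      induction hconn with
      | refl => rw [sub_self]; exact zero_mem _
      | tail _ hstep ih =>
        obtain ⟨i, j, k, l, w, hw, hstep⟩ := prod_map_X_sub_prod_map_X_of_quadStep (K := K) hstep
        rw [← sub_add_sub_cancel, hstep]
        exact add_mem ih (Ideal.mul_mem_left _ _ (Ideal.subset_span ⟨i, j, k, l, hw, rfl⟩))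

end Toric

namespace Function.Pullback

variable {σ₁ σ₂ C A : Type*} {f : σ₁ → C} {g : σ₂ → C}

def swap (p : f.Pullback g) : g.Pullback f := ⟨(p.snd, p.fst), p.2.symm⟩

@[simp] lemma swap_fst (p : f.Pullback g) : p.swap.fst = p.snd := rfl

@[simp] lemma swap_snd (p : f.Pullback g) : p.swap.snd = p.fst := rfl

@[simp] lemma swap_swap (p : f.Pullback g) : p.swap.swap = p := rfl

def mk (a : σ₁) (b : σ₂) (h : f a = g b) : f.Pullback g := ⟨(a, b), h⟩

@[simp] lemma mk_fst {a : σ₁} {b : σ₂} (h : f a = g b) : (mk a b h).fst = a := rfl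

@[simp] lemma mk_snd {a : σ₁} {b : σ₂} (h : f a = g b) : (mk a b h).snd = b := rfl

variable [AddCommMonoid A]

def weight (d₁ : σ₁ → A) (d₂ : σ₂ → A) (p : f.Pullback g) : A := d₁ p.fst + d₂ p.snd

variable {d₁ : σ₁ → A} {d₂ : σ₂ → A}

lemma weight_swap (p : f.Pullback g) : weight d₂ d₁ p.swap = weight d₁ d₂ p := add_comm _ _

lemma exists_quadStep_of_quadStep_map_fst (hf : QuadStepInvariant d₁ f)
    {m : Multiset (f.Pullback g)} {μ : Multiset σ₁} (h : QuadStep d₁ (m.map fst) μ) :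
    ∃ m', m'.map fst = μ ∧ m'.map snd = m.map snd ∧ QuadStep (weight d₁ d₂) m m' := by
  obtain ⟨i, j, k, l, w, hw, hm, rfl⟩ := h
  obtain ⟨p, m₁, rfl, rfl, hm₁⟩ := Multiset.exists_cons_of_map_eq_cons hm
  obtain ⟨q, r, rfl, rfl, rfl⟩ := Multiset.exists_cons_of_map_eq_cons hm₁
  -- replace the first coordinates of `p` and `q` by `k` and `l`, in one of the two orders
  have replace (k l) (hk : f k = g p.snd) (hl : f l = g q.snd)
      (hw : d₁ p.fst + d₁ q.fst = d₁ k + d₁ l) :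
      QuadStep (weight d₁ d₂) (p ::ₘ q ::ₘ r) (mk k p.snd hk ::ₘ mk l q.snd hl ::ₘ r) :=
    ⟨p, q, _, _, r, by simp only [weight, mk_fst, mk_snd]; rw [add_add_add_comm, hw,
      add_add_add_comm], rfl, rfl⟩
  rcases Sym2.eq_iff.1 (hf hw) with ⟨hk, hl⟩ | ⟨hl, hk⟩
  · exact ⟨_, by simp, by simp, replace k l (hk.symm.trans p.2) (hl.symm.trans q.2) hw⟩
  · exact ⟨_, by simp [Multiset.cons_swap], by simp,
      replace l k (hl.symm.trans p.2) (hk.symm.trans q.2) (hw.trans (add_comm _ _))⟩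

lemma exists_reflTransGen_of_reflTransGen_map_fst (hf : QuadStepInvariant d₁ f)
    {m : Multiset (f.Pullback g)} {μ : Multiset σ₁} (h : ReflTransGen (QuadStep d₁) (m.map fst) μ) :
    ∃ m', m'.map fst = μ ∧ m'.map snd = m.map snd ∧
      ReflTransGen (QuadStep (weight d₁ d₂)) m m' := by
  induction h with
  | refl => exact ⟨m, rfl, rfl, .refl⟩
  | tail _ hstep ih =>
    obtain ⟨m₁, h₁, h₁', hm₁⟩ := ih
    obtain ⟨m₂, h₂, h₂', hm₂⟩ := exists_quadStep_of_quadStep_map_fst (d₂ := d₂) hf (h₁ ▸ hstep)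
    exact ⟨m₂, h₂, h₂'.trans h₁', hm₁.tail hm₂⟩

lemma exists_reflTransGen_of_reflTransGen_map_snd (hg : QuadStepInvariant d₂ g)
    {m : Multiset (f.Pullback g)} {μ : Multiset σ₂} (h : ReflTransGen (QuadStep d₂) (m.map snd) μ) :
    ∃ m', m'.map snd = μ ∧ m'.map fst = m.map fst ∧
      ReflTransGen (QuadStep (weight d₁ d₂)) m m' := by
  have hswap : (m.map swap).map fst = m.map snd := by simp [Function.comp_def]
  obtain ⟨n, hn, hn', hmn⟩ := exists_reflTransGen_of_reflTransGen_map_fst (d₂ := d₁) hg (hswap ▸ h)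
  refine ⟨n.map swap, by simpa [Function.comp_def] using hn,
    by simpa [Function.comp_def] using hn', ?_⟩
  simpa [Function.onFun, Function.comp_def] using ReflTransGen.lift (p := QuadStep (weight d₁ d₂))
    (Multiset.map swap) (fun _ _ => QuadStep.map swap fun i j k l hw => by
      simpa only [weight_swap] using hw) _ _ hmn

lemma reflTransGen_quadStep_of_map_fst_eq_of_map_snd_eq {m m' : Multiset (f.Pullback g)}
    (h₁ : m.map fst = m'.map fst) (h₂ : m.map snd = m'.map snd) :
    ReflTransGen (QuadStep (weight d₁ d₂)) m m' := by
  induction m' using Multiset.induction_on generalizing m with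
  | empty =>
    rw [Multiset.map_zero, Multiset.map_eq_zero] at h₁
    exact h₁ ▸ .refl
  | cons p' n' ih =>
    by_cases hp' : p' ∈ m
    · obtain ⟨n, rfl⟩ := Multiset.exists_cons_of_mem hp'
      simp only [Multiset.map_cons, Multiset.cons_inj_right] at h₁ h₂
      exact QuadStep.reflTransGen_cons p' (ih h₁ h₂)
    -- otherwise exchange the second coordinates of two members `q`, `p` of `m`
    rw [Multiset.map_cons] at h₁ h₂
    obtain ⟨q, n, rfl, hq, hn⟩ := Multiset.exists_cons_of_map_eq_cons h₂
    have hpn : p'.fst ∈ n.map fst := by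
      have hmem : p'.fst ∈ (q ::ₘ n).map fst := h₁ ▸ Multiset.mem_cons_self _ _
      rw [Multiset.map_cons, Multiset.mem_cons] at hmem
      refine hmem.resolve_left fun hfst => hp' ?_
      rw [show p' = q from Subtype.ext (Prod.ext hfst hq.symm)]
      exact Multiset.mem_cons_self _ _
    obtain ⟨p, hp, hpfst⟩ := Multiset.mem_map.1 hpn
    obtain ⟨r, rfl⟩ := Multiset.exists_cons_of_mem hp
    have hr : f q.fst = g p.snd :=
      q.2.trans ((congrArg g hq).trans (p'.2.symm.trans ((congrArg f hpfst.symm).trans p.2)))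
    have hstep : QuadStep (weight d₁ d₂) (q ::ₘ p ::ₘ r) (p' ::ₘ mk q.fst p.snd hr ::ₘ r) :=
      ⟨q, p, p', _, r, by simp only [weight, mk_fst, mk_snd, ← hq, ← hpfst]; abel, rfl, rfl⟩
    refine .head hstep (QuadStep.reflTransGen_cons p' (ih ?_ ?_))
    · simp only [Multiset.map_cons, hpfst, Multiset.cons_swap q.fst, Multiset.cons_inj_right]
        at h₁
      simpa using h₁
    · simpa using hn

theorem reflTransGen_quadStep_weight (hf : QuadStepInvariant d₁ f) (hg : QuadStepInvariant d₂ g)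
    {m m' : Multiset (f.Pullback g)}
    (h₁ : ReflTransGen (QuadStep d₁) (m.map fst) (m'.map fst))
    (h₂ : ReflTransGen (QuadStep d₂) (m.map snd) (m'.map snd)) :
    ReflTransGen (QuadStep (weight d₁ d₂)) m m' := by
  obtain ⟨m₁, hm₁, hm₁', hmm₁⟩ := exists_reflTransGen_of_reflTransGen_map_fst (d₂ := d₂) hf h₁
  obtain ⟨m₂, hm₂, hm₂', hm₁m₂⟩ :=
    exists_reflTransGen_of_reflTransGen_map_snd (d₁ := d₁) hg (hm₁' ▸ h₂)
  exact hmm₁.trans (hm₁m₂.trans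
    (reflTransGen_quadStep_of_map_fst_eq_of_map_snd_eq (hm₂'.trans hm₁) hm₂))

end Function.Pullback

section TwoSum

variable {α : Type*}

abbrev FinsetBase (M : Matroid α) : Type _ := {B : Finset α // M.IsBase ↑B}

namespace FinsetBase

variable {M : Matroid α}

def weight (B : FinsetBase M) : Multiset α := B.1.val

lemma card_weight_eq (B B' : FinsetBase M) :
    Multiset.card B.weight = Multiset.card B'.weight := by
  simpa [weight] using B.2.ncard_eq_ncard_of_isBase B'.2

lemma weight_ne_zero {c : α} (hc : ∃ B, M.IsBase B ∧ c ∈ B) (B : FinsetBase M) :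
    B.weight ≠ 0 := by
  obtain ⟨B₀, hB₀, hcB₀⟩ := hc
  have : M.RankPos := hB₀.rankPos_of_nonempty ⟨c, hcB₀⟩
  simpa [weight, ← Finset.nonempty_iff_ne_empty] using B.2.nonempty

lemma mem_ground_of_mem_bind {μ : Multiset (FinsetBase M)} {a : α} (ha : a ∈ μ.bind weight) :
    a ∈ M.E := by
  obtain ⟨B, -, haB⟩ := Multiset.mem_bind.1 ha
  exact B.2.subset_ground haB

lemma quadStepInvariant_mem [DecidableEq α] (c : α) :
    QuadStepInvariant weight fun B : FinsetBase M => c ∈ B.1 := by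
  intro i j k l h
  have hc := congrArg (Multiset.count c) h
  simp only [weight, Multiset.count_add, Multiset.count_eq_of_nodup (Finset.nodup _),
    Finset.mem_val] at hc
  by_cases hi : c ∈ i.1 <;> by_cases hj : c ∈ j.1 <;> by_cases hk : c ∈ k.1 <;>
    by_cases hl : c ∈ l.1 <;> simp_all [Sym2.eq_swap]

lemma quadStepInvariant_notMem [DecidableEq α] (c : α) :
    QuadStepInvariant weight fun B : FinsetBase M => c ∉ B.1 :=
  fun _ _ _ _ h => congrArg (Sym2.map Not) (quadStepInvariant_mem c h)

end FinsetBase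

-- pairs `(B, D)` of bases of `M₁` and `M₂` of which exactly one contains `c`
abbrev TwoSumPair (M₁ M₂ : Matroid α) (c : α) : Type _ :=
  (fun B : FinsetBase M₁ => c ∈ B.1).Pullback fun D : FinsetBase M₂ => c ∉ D.1

namespace TwoSumPair

open Function.Pullback

variable {M₁ M₂ : Matroid α} {c : α}

lemma mem_iff_notMem (p : TwoSumPair M₁ M₂ c) : c ∈ p.fst.1 ↔ c ∉ p.snd.1 := Iff.of_eq p.2

lemma mem_union [DecidableEq α] (p : TwoSumPair M₁ M₂ c) : c ∈ p.fst.1 ∪ p.snd.1 := by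
  have := p.mem_iff_notMem
  rw [Finset.mem_union]
  tauto

lemma disjoint (hE : M₁.E ∩ M₂.E = {c}) (p : TwoSumPair M₁ M₂ c) :
    Disjoint p.fst.1 p.snd.1 := by
  refine Finset.disjoint_left.2 fun a ha hb => ?_
  obtain rfl : a = c := hE.le ⟨p.fst.2.subset_ground ha, p.snd.2.subset_ground hb⟩
  exact p.mem_iff_notMem.1 ha hb

def base [DecidableEq α] (p : TwoSumPair M₁ M₂ c) : Finset α := (p.fst.1 ∪ p.snd.1).erase c

lemma cons_base_val [DecidableEq α] (hE : M₁.E ∩ M₂.E = {c}) (p : TwoSumPair M₁ M₂ c) :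
    c ::ₘ p.base.val = weight FinsetBase.weight FinsetBase.weight p := by
  rw [base, Finset.erase_val, Multiset.cons_erase p.mem_union,
    ← Finset.disjUnion_eq_union _ _ (p.disjoint hE)]
  rfl

lemma bind_map_fst_eq_and_bind_map_snd_eq (hE : M₁.E ∩ M₂.E = {c})
    {n n' : Multiset (TwoSumPair M₁ M₂ c)}
    (h : n.bind (weight FinsetBase.weight FinsetBase.weight) =
      n'.bind (weight FinsetBase.weight FinsetBase.weight))
    (hcard : Multiset.card n = Multiset.card n') :
    (n.map fst).bind FinsetBase.weight = (n'.map fst).bind FinsetBase.weight ∧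
      (n.map snd).bind FinsetBase.weight = (n'.map snd).bind FinsetBase.weight := by
  have hsplit (n : Multiset (TwoSumPair M₁ M₂ c)) :
      n.bind (weight FinsetBase.weight FinsetBase.weight) =
        (n.map fst).bind FinsetBase.weight + (n.map snd).bind FinsetBase.weight := by
    rw [Multiset.bind_map, Multiset.bind_map, ← Multiset.bind_add]
    rfl
  rw [hsplit, hsplit] at h
  have hfst := Multiset.eq_of_add_eq_add_of_card_eq hE
    (fun _ => FinsetBase.mem_ground_of_mem_bind) (fun _ => FinsetBase.mem_ground_of_mem_bind)
    (fun _ => FinsetBase.mem_ground_of_mem_bind) (fun _ => FinsetBase.mem_ground_of_mem_bind) h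
    (Multiset.card_bind_eq_card_bind FinsetBase.card_weight_eq (by simpa using hcard))
  exact ⟨hfst, add_left_cancel (hfst ▸ h)⟩

end TwoSumPair

def HasTwoSumBases [DecidableEq α] (M M₁ M₂ : Matroid α) (c : α) : Prop :=
  ∀ S : Finset α, M.IsBase ↑S ↔ ∃ p : TwoSumPair M₁ M₂ c, p.base = S

namespace HasTwoSumBases

open Function.Pullback

variable [DecidableEq α] {M M₁ M₂ : Matroid α} {c : α}

def toBase (hM : HasTwoSumBases M M₁ M₂ c) (p : TwoSumPair M₁ M₂ c) : FinsetBase M :=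
  ⟨p.base, (hM _).2 ⟨p, rfl⟩⟩

lemma toBase_surjective (hM : HasTwoSumBases M M₁ M₂ c) : Function.Surjective hM.toBase :=
  fun S => let ⟨p, hp⟩ := (hM S.1).1 S.2; ⟨p, Subtype.ext hp⟩

lemma weight_ne_zero (hM : HasTwoSumBases M M₁ M₂ c) (hE : M₁.E ∩ M₂.E = {c})
    (h₁ : ∃ B, M₁.IsBase B ∧ c ∈ B) (h₂ : ∃ D, M₂.IsBase D ∧ c ∈ D) (S : FinsetBase M) :
    S.weight ≠ 0 := by
  obtain ⟨p, rfl⟩ := hM.toBase_surjective S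
  have hcard := congrArg Multiset.card (p.cons_base_val hE)
  have hB := Multiset.card_pos.2 (p.fst.weight_ne_zero h₁)
  have hD := Multiset.card_pos.2 (p.snd.weight_ne_zero h₂)
  rw [Multiset.card_cons, weight, Multiset.card_add] at hcard
  rw [← Multiset.card_pos]
  change 0 < Multiset.card p.base.val
  omega

lemma bind_weight (hM : HasTwoSumBases M M₁ M₂ c) (hE : M₁.E ∩ M₂.E = {c})
    (n : Multiset (TwoSumPair M₁ M₂ c)) :
    n.bind (weight FinsetBase.weight FinsetBase.weight) =
      Multiset.replicate (Multiset.card n) c + (n.map hM.toBase).bind FinsetBase.weight := by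
  induction n using Multiset.induction_on with
  | empty => simp
  | cons p n ih =>
    rw [Multiset.cons_bind, ih, ← p.cons_base_val hE]
    simp [Multiset.replicate_succ, toBase, FinsetBase.weight, add_left_comm]

theorem reflTransGen_quadStep (hM : HasTwoSumBases M M₁ M₂ c) (hE : M₁.E ∩ M₂.E = {c})
    (h₁ : ∃ B, M₁.IsBase B ∧ c ∈ B) (h₂ : ∃ D, M₂.IsBase D ∧ c ∈ D)
    (hM₁ : ∀ μ μ' : Multiset (FinsetBase M₁), μ.bind FinsetBase.weight =
      μ'.bind FinsetBase.weight → ReflTransGen (QuadStep FinsetBase.weight) μ μ')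
    (hM₂ : ∀ μ μ' : Multiset (FinsetBase M₂), μ.bind FinsetBase.weight =
      μ'.bind FinsetBase.weight → ReflTransGen (QuadStep FinsetBase.weight) μ μ')
    {m m' : Multiset (FinsetBase M)} (h : m.bind FinsetBase.weight = m'.bind FinsetBase.weight) :
    ReflTransGen (QuadStep FinsetBase.weight) m m' := by
  obtain ⟨n, rfl⟩ := Multiset.map_surjective_of_surjective hM.toBase_surjective m
  obtain ⟨n', rfl⟩ := Multiset.map_surjective_of_surjective hM.toBase_surjective m'
  have hcard : Multiset.card n = Multiset.card n' := by
    simpa using Multiset.card_eq_card_of_bind_eq FinsetBase.card_weight_eq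
      (hM.weight_ne_zero hE h₁ h₂) h
  obtain ⟨hfst, hsnd⟩ := TwoSumPair.bind_map_fst_eq_and_bind_map_snd_eq hE
    (by rw [hM.bind_weight hE, hM.bind_weight hE, h, hcard]) hcard
  have hn := reflTransGen_quadStep_weight (FinsetBase.quadStepInvariant_mem c)
    (FinsetBase.quadStepInvariant_notMem c) (hM₁ _ _ hfst) (hM₂ _ _ hsnd)
  refine ReflTransGen.lift (Multiset.map hM.toBase)
    (fun _ _ => QuadStep.map hM.toBase fun i j k l hw => ?_) _ _ hn
  -- the weight of a pair exceeds that of the corresponding base of `M` by one copy of `c`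
  simp only [← TwoSumPair.cons_base_val hE, Multiset.cons_add, Multiset.add_cons,
    Multiset.cons_inj_right] at hw
  exact hw

end HasTwoSumBases

open Matroid in
lemma hasTwoSumBases_contract [DecidableEq α] {M₁ M₂ MS : Matroid α} {c : α}
    (hE : M₁.E ∩ M₂.E = {c})
    (hS : ∀ S : Set α, MS.IsBase S ↔
      ∃ B D, M₁.IsBase B ∧ M₂.IsBase D ∧ Disjoint B D ∧ S = B ∪ D)
    (hc : MS.Indep {c}) : HasTwoSumBases (MS ／ {c}) M₁ M₂ c := by
  intro S
  rw [hc.contract_isBase_iff, hS, Set.disjoint_singleton_right, Finset.mem_coe]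
  constructor
  · rintro ⟨⟨B, D, hB, hD, hBD, hSBD⟩, hcS⟩
    have hfin : (↑S ∪ {c} : Set α).Finite := S.finite_toSet.union (Set.finite_singleton c)
    lift B to Finset α using hfin.subset (hSBD ▸ Set.subset_union_left)
    lift D to Finset α using hfin.subset (hSBD ▸ Set.subset_union_right)
    have hcBD : c ∈ B ∨ c ∈ D := by simpa using hSBD.le (Set.mem_union_right _ rfl)
    refine ⟨⟨(⟨B, hB⟩, ⟨D, hD⟩), propext ⟨fun hcB hcD => ?_, hcBD.resolve_right⟩⟩, ?_⟩
    · exact Set.disjoint_left.1 hBD hcB hcD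
    · apply Finset.coe_injective
      change ((B ∪ D).erase c : Set α) = S
      rw [Finset.coe_erase, Finset.coe_union, ← hSBD, Set.union_sdiff_right,
        Set.sdiff_singleton_eq_self (by simpa using hcS)]
  · rintro ⟨p, rfl⟩
    refine ⟨⟨p.fst.1, p.snd.1, p.fst.2, p.snd.2, Finset.disjoint_coe.2 (p.disjoint hE), ?_⟩,
      Finset.notMem_erase _ _⟩
    rw [TwoSumPair.base, Finset.coe_erase, Set.sdiff_union_self, Finset.coe_union,
      Set.union_eq_left.2 (Set.singleton_subset_iff.2 (by exact_mod_cast p.mem_union))]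

end TwoSum

section LoopsAndContraction

variable {α : Type}

open Matroid in
lemma IsContractionOf.eq_contract {M' M : Matroid α} {c : α} (h : IsContractionOf M' M c)
    (hc : M.Indep {c}) : M' = M ／ {c} := by
  obtain ⟨hE, hB⟩ := h
  have hco : ¬ IsColoopElem M✶ c := by
    obtain ⟨B, hB, hcB⟩ := hc.exists_isBase_superset
    exact fun h => (h _ hB.compl_isBase_dual).2 (hcB rfl)
  rw [← M'.dual_dual, ← dual_delete_dual]
  congr 1
  refine ext_isBase (by simpa using hE) fun S hS => ?_
  rw [hB, (dual_coindep_iff.2 hc).delete_isBase_iff]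
  simp [hco, Set.disjoint_singleton_right]

lemma exists_isBase_mem_of_not_isLoopElem {M : Matroid α} {c : α} (hc : c ∈ M.E)
    (h : ¬ IsLoopElem M c) : ∃ B, M.IsBase B ∧ c ∈ B := by
  by_contra! hB
  exact h ⟨hc, hB⟩

lemma exists_isBase_notMem_of_not_isColoopElem {M : Matroid α} {c : α}
    (h : ¬ IsColoopElem M c) : ∃ B, M.IsBase B ∧ c ∉ B := by
  simpa [IsColoopElem] using h

lemma matroidToricIdeal_eq_ker_toricHom (K : Type) [Field K] [Fintype α] [DecidableEq α]
    (M : Matroid α) :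
    matroidToricIdeal K M = RingHom.ker (toricHom K (FinsetBase.weight (M := M))).toRingHom :=
  rfl

end LoopsAndContraction

theorem statement17_general (K : Type) [Field K] {α : Type} [Fintype α] [DecidableEq α]
    (M₁ M₂ MS M2s : Matroid α) (c : α) (hE : M₁.E ∩ M₂.E = {c})
    (hl1 : ¬ IsLoopElem M₁ c)
    (hl2 : ¬ IsLoopElem M₂ c) (hc2 : ¬ IsColoopElem M₂ c)
    -- `MS` is the series connection `S(M₁, M₂)` with respect to the basepoint `c`
    (hS : ∀ S : Set α, MS.IsBase S ↔
      ∃ B D, M₁.IsBase B ∧ M₂.IsBase D ∧ Disjoint B D ∧ S = B ∪ D)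
    -- the 2-sum `M₁ ⊕₂ M₂` is the contraction `S(M₁, M₂) / c`
    (h2s : IsContractionOf M2s MS c)
    (h₁ : GeneratedByQuadBinomials (matroidToricIdeal K M₁))
    (h₂ : GeneratedByQuadBinomials (matroidToricIdeal K M₂)) :
    GeneratedByQuadBinomials (matroidToricIdeal K M2s) := by
  have hcE : c ∈ M₁.E ∩ M₂.E := hE.ge rfl
  obtain ⟨B, hB, hcB⟩ := exists_isBase_mem_of_not_isLoopElem hcE.1 hl1
  obtain ⟨D, hD, hcD⟩ := exists_isBase_notMem_of_not_isColoopElem hc2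
  have hBD : Disjoint B D := Set.disjoint_left.2 fun a haB haD =>
    hcD ((hE.le ⟨hB.subset_ground haB, hD.subset_ground haD⟩ : a = c) ▸ haD)
  have hc : MS.Indep {c} :=
    ((hS _).2 ⟨B, D, hB, hD, hBD, rfl⟩).indep.subset (Set.singleton_subset_iff.2 (.inl hcB))
  have hM : HasTwoSumBases M2s M₁ M₂ c := h2s.eq_contract hc ▸ hasTwoSumBases_contract hE hS hc
  rw [matroidToricIdeal_eq_ker_toricHom, generatedByQuadBinomials_ker_toricHom_iff] at h₁ h₂ ⊢
  exact fun m m' h => hM.reflTransGen_quadStep hE ⟨B, hB, hcB⟩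
    (exists_isBase_mem_of_not_isLoopElem hcE.2 hl2) h₁ h₂ h

/-- Quadratic generation of toric ideals of matroids is preserved by 2-sums. -/
theorem statement17 (K : Type) [Field K] {α : Type} [Fintype α] [DecidableEq α]
    (M₁ M₂ MS M2s : Matroid α) (c : α) (hE : M₁.E ∩ M₂.E = {c})
    (hl1 : ¬ IsLoopElem M₁ c) (hc1 : ¬ IsColoopElem M₁ c)
    (hl2 : ¬ IsLoopElem M₂ c) (hc2 : ¬ IsColoopElem M₂ c)
    -- `MS` is the series connection `S(M₁, M₂)` with respect to the basepoint `c`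
    (hSE : MS.E = M₁.E ∪ M₂.E)
    (hS : ∀ S : Set α, MS.IsBase S ↔
      ∃ B D, M₁.IsBase B ∧ M₂.IsBase D ∧ Disjoint B D ∧ S = B ∪ D)
    -- the 2-sum `M₁ ⊕₂ M₂` is the contraction `S(M₁, M₂) / c`
    (h2s : IsContractionOf M2s MS c)
    (h₁ : GeneratedByQuadBinomials (matroidToricIdeal K M₁))
    (h₂ : GeneratedByQuadBinomials (matroidToricIdeal K M₂)) :
    GeneratedByQuadBinomials (matroidToricIdeal K M2s) :=
  statement17_general K M₁ M₂ MS M2s c hE hl1 hl2 hc2 hS h2s h₁ h₂
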